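/- arXiv:1905.13411 — 2 statements merged into one kernel-verified Lean document; each statement's English description precedes it below -/
import Mathlib

section
/- In every state (S, C, D, χ, α) reachable from the initial state via the transition rules of basic Incremental Determinization, every existential variable in the union of D has a unique Skolem function for domain χ∧α in the clause set C|_D (where C and D denote the unions of the respective stacks). -/
/-! Basic framework: variables are `X ⊕ Y` where `X` are the universal and
`Y` the existential variables (this makes `X` and `Y` disjoint by construction). -/

/-- A literal: a variable together with a polarity. -/
abbrev Lit (X Y : Type) := (X ⊕ Y) × Bool

/-- A clause is a finite set of literals. -/
abbrev Clause (X Y : Type) := Finset (Lit X Y)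

/-- A (total) assignment to all variables. Assignments "to a set `D` of variables"
are modelled as total assignments; all notions below only inspect the relevant variables. -/
abbrev Assn (X Y : Type) := (X ⊕ Y) → Bool

/-- An assignment satisfies a literal if it maps its variable to its polarity. -/
def satLit {X Y : Type} (σ : Assn X Y) (l : Lit X Y) : Prop := σ l.1 = l.2

/-- An assignment satisfies a clause if it satisfies at least one of its literals. -/
def satClause {X Y : Type} (σ : Assn X Y) (c : Clause X Y) : Prop := ∃ l ∈ c, satLit σ l

/-- An assignment satisfies a clause set if it satisfies every clause in it. -/
def satCnf {X Y : Type} (σ : Assn X Y) (ψ : Set (Clause X Y)) : Prop := ∀ c ∈ ψ, satClause σ c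

/-- The combined assignment `(xa, ya)`. -/
def combine {X Y : Type} (xa : X → Bool) (ya : Y → Bool) : Assn X Y := Sum.elim xa ya

/-- The restriction of an assignment to the universal variables `X`. -/
def restrX {X Y : Type} (σ : Assn X Y) : X → Bool := fun x => σ (Sum.inl x)

/-- Truth of the 2QBF `∀X.∃Y.φ`: there is a Skolem function `f` such that for every
assignment `xa` to `X` the combined assignment `(xa, f(xa))` satisfies `φ`. -/
def qbfTrue {X Y : Type} (φ : Set (Clause X Y)) : Prop :=
  ∃ f : (X → Bool) → (Y → Bool), ∀ xa : X → Bool, satCnf (combine xa (f xa)) φ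

/-- `v` has a unique Skolem function for domain `χ` in `ψ`: for every assignment `xa` to `X`
satisfying `χ` there is exactly one Boolean `b` such that some assignment `ya` to the
existential variables with `ya v = b` makes `(xa, ya)` satisfy `ψ`. -/
def uniqueSkolem {X Y : Type} (ψ : Set (Clause X Y)) (χ : (X → Bool) → Prop) (v : Y) : Prop :=
  ∀ xa : X → Bool, χ xa →
    ∃! b : Bool, ∃ ya : Y → Bool, ya v = b ∧ satCnf (combine xa ya) ψ

/-- `C|_D`: the clauses of `C` all of whose variables lie in `D`. -/
def restrictC {X Y : Type} (C : Set (Clause X Y)) (D : Set (X ⊕ Y)) : Set (Clause X Y) :=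
  {c ∈ C | ∀ l ∈ c, l.1 ∈ D}

/-- Clause `c` has unique consequence `v` relative to `D`: it contains a literal of `v`
and all its other literals are of variables in `D`. -/
def hasUC {X Y : Type} (c : Clause X Y) (v : Y) (D : Set (X ⊕ Y)) : Prop :=
  (∃ b : Bool, (Sum.inr v, b) ∈ c) ∧ ∀ l ∈ c, l.1 ≠ Sum.inr v → l.1 ∈ D

/-- `U_v`: the clauses of `C` with unique consequence `v` relative to `D`. -/
def UC {X Y : Type} (C : Set (Clause X Y)) (v : Y) (D : Set (X ⊕ Y)) : Set (Clause X Y) :=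
  {c ∈ C | hasUC c v D}

/-- `A_(v,b)`: some clause `c` in `U_v` contains the literal `(v, b)` and the assignment
falsifies every literal of `c` other than the literals of `v`. -/
def Ant {X Y : Type} (C : Set (Clause X Y)) (v : Y) (D : Set (X ⊕ Y)) (b : Bool)
    (σ : Assn X Y) : Prop :=
  ∃ c ∈ UC C v D, (Sum.inr v, b) ∈ c ∧ ∀ l ∈ c, l.1 ≠ Sum.inr v → ¬ satLit σ l

/-- `deterministic(v, C, χ, D)`. -/
def deterministic {X Y : Type} (v : Y) (C : Set (Clause X Y)) (χ : (X → Bool) → Prop)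
    (D : Set (X ⊕ Y)) : Prop :=
  ∀ σ : Assn X Y, satCnf σ (restrictC C D) → χ (restrX σ) →
    Ant C v D true σ ∨ Ant C v D false σ

/-- `unconflicted(v, C, χ, D)`. -/
def unconflicted {X Y : Type} (v : Y) (C : Set (Clause X Y)) (χ : (X → Bool) → Prop)
    (D : Set (X ⊕ Y)) : Prop :=
  ∀ σ : Assn X Y, satCnf σ (restrictC C D) → χ (restrX σ) →
    ¬ (Ant C v D true σ ∧ Ant C v D false σ)

/-- `v` has a unique Skolem function relative to `D` for domain `χ` in `C`: for every
assignment to `D` satisfying `C|_D` whose restriction to `X` satisfies `χ`, there is exactly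
one Boolean `b` such that extending the assignment by `v ↦ b` satisfies every clause of `U_v`. -/
def uniqueSkolemRel {X Y : Type} [DecidableEq X] [DecidableEq Y] (v : Y)
    (C : Set (Clause X Y)) (χ : (X → Bool) → Prop) (D : Set (X ⊕ Y)) : Prop :=
  ∀ σ : Assn X Y, satCnf σ (restrictC C D) → χ (restrX σ) →
    ∃! b : Bool, satCnf (Function.update σ (Sum.inr v) b) (UC C v D)

/-! The state of the Incremental Determinization solver. -/

/-- The solver status. -/
inductive Status (X Y : Type) where
  | ready : Status X Y
  | conflict (L : Clause X Y) (d : Assn X Y) : Status X Y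
  | sat : Status X Y
  | unsat : Status X Y

/-- A solver state `(S, C, D, χ, α)`: a status, a stack of clause sets, a stack of sets of
variables, and two predicates on assignments to `X`. -/
structure IDState (X Y : Type) where
  status : Status X Y
  C : List (Set (Clause X Y))
  D : List (Set (X ⊕ Y))
  chi : (X → Bool) → Prop
  alpha : (X → Bool) → Prop

/-- The union of the elements of a stack of sets. -/
def stackUnion {β : Type} (S : List (Set β)) : Set β := {x | ∃ s ∈ S, x ∈ s}

/-- The first element (index 0) of a stack of sets. -/
def first {β : Type} (S : List (Set β)) : Set β := S.getD 0 ∅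

/-- Add an element to the last set of a stack. -/
def addLast {β : Type} : List (Set β) → β → List (Set β)
  | [], v => [{v}]
  | [s], v => [insert v s]
  | s :: t :: rest, v => s :: addLast (t :: rest) v

/-- Add an element to the first set of a stack. -/
def addFirst {β : Type} : List (Set β) → β → List (Set β)
  | [], x => [{x}]
  | s :: rest, x => insert x s :: rest

/-- The initial state `(Ready, ⟨φ⟩, ⟨X⟩, ⊤, ⊤)`. -/
def initState {X Y : Type} (φ : Set (Clause X Y)) : IDState X Y :=
  ⟨Status.ready, [φ], [Set.range Sum.inl], fun _ => True, fun _ => True⟩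

/-- The transition rules of basic Incremental Determinization. -/
inductive Step {X Y : Type} [DecidableEq X] [DecidableEq Y] :
    IDState X Y → IDState X Y → Prop

  | propagate (C : List (Set (Clause X Y))) (D : List (Set (X ⊕ Y)))
      (χ α : (X → Bool) → Prop) (v : Y)
      (hv : Sum.inr v ∉ stackUnion D)
      (hdet : deterministic v (stackUnion C) (fun xa => χ xa ∧ α xa) (stackUnion D))
      (hunc : unconflicted v (stackUnion C) (fun xa => χ xa ∧ α xa) (stackUnion D)) :
      Step ⟨Status.ready, C, D, χ, α⟩ ⟨Status.ready, C, addLast D (Sum.inr v), χ, α⟩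
  | decide (C : List (Set (Clause X Y))) (D : List (Set (X ⊕ Y)))
      (χ α : (X → Bool) → Prop) (v : Y) (δ : Set (Clause X Y))
      (hv : Sum.inr v ∉ stackUnion D) (hδfin : δ.Finite)
      (hδ : ∀ c ∈ δ, hasUC c v (stackUnion D)) :
      Step ⟨Status.ready, C, D, χ, α⟩ ⟨Status.ready, C ++ [δ], D ++ [∅], χ, α⟩
  | sat (C : List (Set (Clause X Y))) (D : List (Set (X ⊕ Y)))
      (χ : (X → Bool) → Prop)
      (hD : stackUnion D = Set.univ) :
      Step ⟨Status.ready, C, D, χ, fun _ => True⟩ ⟨Status.sat, C, D, χ, fun _ => True⟩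
  | conflict (C : List (Set (Clause X Y))) (D : List (Set (X ⊕ Y)))
      (χ α : (X → Bool) → Prop) (v : Y) (σ : Assn X Y)
      (hv : Sum.inr v ∉ stackUnion D)
      (hsat : satCnf σ (restrictC (stackUnion C) (stackUnion D)))
      (hχ : χ (restrX σ)) (hα : α (restrX σ))
      (ht : Ant (stackUnion C) v (stackUnion D) true σ)
      (hf : Ant (stackUnion C) v (stackUnion D) false σ) :
      Step ⟨Status.ready, C, D, χ, α⟩
        ⟨Status.conflict {(Sum.inr v, true), (Sum.inr v, false)} σ, C, D, χ, α⟩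
  | analyze (C : List (Set (Clause X Y))) (D : List (Set (X ⊕ Y)))
      (χ α : (X → Bool) → Prop) (L : Clause X Y) (σ : Assn X Y)
      (c : Clause X Y) (l : Lit X Y)
      (hc : c ∈ first C) (hl : l ∈ L) (hlc : (l.1, !l.2) ∈ c) :
      Step ⟨Status.conflict L σ, C, D, χ, α⟩
        ⟨Status.conflict (L.erase l ∪ c.erase (l.1, !l.2)) σ, C, D, χ, α⟩
  | learn (C : List (Set (Clause X Y))) (D : List (Set (X ⊕ Y)))
      (χ α : (X → Bool) → Prop) (L : Clause X Y) (σ : Assn X Y)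
      (h : ∃ l ∈ L, l.1 ∉ stackUnion D) :
      Step ⟨Status.conflict L σ, C, D, χ, α⟩ ⟨Status.ready, addFirst C L, D, χ, α⟩
  | unsat (C : List (Set (Clause X Y))) (D : List (Set (X ⊕ Y)))
      (χ α : (X → Bool) → Prop) (L : Clause X Y) (σ : Assn X Y)
      (hvars : ∀ l ∈ L, l.1 ∈ first D)
      (hfals : ∀ l ∈ L, ¬ satLit σ l) :
      Step ⟨Status.conflict L σ, C, D, χ, α⟩ ⟨Status.unsat, C, D, χ, α⟩
  | backtrack (S : Status X Y) (C : List (Set (Clause X Y))) (D : List (Set (X ⊕ Y)))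
      (χ α : (X → Bool) → Prop) (k : ℕ) (h0 : 0 < k) (hk : k ≤ C.length) :
      Step ⟨S, C, D, χ, α⟩ ⟨S, C.take k, D.take k, χ, α⟩

/-- Reachability from the initial state via the basic ID rules. -/
def Reachable {X Y : Type} [DecidableEq X] [DecidableEq Y] (φ : Set (Clause X Y))
    (s : IDState X Y) : Prop :=
  Relation.ReflTransGen Step (initState φ) s

/-! The invariant behind the theorem: for every nonempty prefix of the stacks (Backtrack may
return to any of them), each assignment to `X` in the domain `χ ∧ α` extends to an assignment
satisfying `C|_D`, and all such extensions agree on the existential variables of `D`.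
Initially `C|_X` is empty, because every clause of `φ` has an existential literal.
Decide and Learn only add clauses that mention a variable outside `D`, so `C|_D` does not change.
For Propagate, the clauses entering `C|_(D ∪ {v})` are exactly `U_v`, and determinism together
with unconflictedness force exactly one value of `v` from the values on `D`. -/

section StackUnion

variable {β : Type}

lemma stackUnion_cons (s : Set β) (S : List (Set β)) :
    stackUnion (s :: S) = s ∪ stackUnion S := by
  ext; simp [stackUnion]

lemma stackUnion_singleton (s : Set β) : stackUnion [s] = s := by
  ext; simp [stackUnion]

lemma stackUnion_append (S T : List (Set β)) :
    stackUnion (S ++ T) = stackUnion S ∪ stackUnion T := by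
  ext; simp [stackUnion, or_and_right, exists_or]

lemma stackUnion_mono {S T : List (Set β)} (h : S ⊆ T) : stackUnion S ⊆ stackUnion T :=
  fun _ ⟨s, hs, hx⟩ => ⟨s, h hs, hx⟩

lemma stackUnion_take_subset (S : List (Set β)) (k : ℕ) : stackUnion (S.take k) ⊆ stackUnion S :=
  stackUnion_mono (List.take_subset _ _)

lemma length_addLast {S : List (Set β)} (x : β) (h : S ≠ []) :
    (addLast S x).length = S.length := by
  induction S with
  | nil => exact absurd rfl h
  | cons s S ih =>
    cases S with
    | nil => rfl
    | cons t S => simp [addLast, ih]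

lemma stackUnion_addLast (S : List (Set β)) (x : β) :
    stackUnion (addLast S x) = insert x (stackUnion S) := by
  induction S with
  | nil => ext; simp [addLast, stackUnion]
  | cons s S ih =>
    cases S with
    | nil => ext; simp [addLast, stackUnion]
    | cons t S => simp only [addLast, stackUnion_cons, ih, Set.union_insert]

lemma take_addLast {S : List (Set β)} (x : β) {k : ℕ} (hk : k < S.length) :
    (addLast S x).take k = S.take k := by
  induction S generalizing k with
  | nil => simp at hk
  | cons s S ih =>
    cases S with
    | nil => simp_all
    | cons t S =>
      cases k with
      | zero => rfl
      | succ k => simp only [addLast, List.take_succ_cons, ih (Nat.lt_of_succ_lt_succ hk)]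

end StackUnion

section Clauses

variable {X Y : Type}

lemma restrictC_mono (C : Set (Clause X Y)) {D D' : Set (X ⊕ Y)} (h : D ⊆ D') :
    restrictC C D ⊆ restrictC C D' :=
  fun _ hc => ⟨hc.1, fun l hl => h (hc.2 l hl)⟩

lemma restrictC_eq_of_subset {C C' : Set (Clause X Y)} {D : Set (X ⊕ Y)} (hsub : C ⊆ C')
    (hnew : ∀ c ∈ C', c ∉ C → ∃ l ∈ c, l.1 ∉ D) : restrictC C' D = restrictC C D := by
  ext c
  refine ⟨fun ⟨hc, hcD⟩ => ⟨?_, hcD⟩, fun ⟨hc, hcD⟩ => ⟨hsub hc, hcD⟩⟩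
  by_contra hcC
  obtain ⟨l, hl, hlD⟩ := hnew c hc hcC
  exact hlD (hcD l hl)

lemma restrictC_insert_inr (C : Set (Clause X Y)) (D : Set (X ⊕ Y)) (v : Y) :
    restrictC C (insert (Sum.inr v) D) = restrictC C D ∪ UC C v D := by
  ext c
  simp only [restrictC, UC, hasUC, Set.mem_union, Set.mem_insert_iff]
  constructor
  · rintro ⟨hc, hcD⟩
    by_cases hall : ∀ l ∈ c, l.1 ∈ D
    · exact Or.inl ⟨hc, hall⟩
    · simp only [not_forall] at hall
      obtain ⟨l, hl, hlD⟩ := hall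
      have hlv : l.1 = Sum.inr v := (hcD l hl).resolve_right hlD
      exact Or.inr ⟨hc, ⟨l.2, hlv ▸ hl⟩, fun l hl hlv => (hcD l hl).resolve_left hlv⟩
  · rintro (⟨hc, hcD⟩ | ⟨hc, -, hcD⟩)
    · exact ⟨hc, fun l hl => Or.inr (hcD l hl)⟩
    · exact ⟨hc, fun l hl => (em (l.1 = Sum.inr v)).imp_right (hcD l hl)⟩

lemma satCnf_union {σ : Assn X Y} {ψ ψ' : Set (Clause X Y)} :
    satCnf σ (ψ ∪ ψ') ↔ satCnf σ ψ ∧ satCnf σ ψ' := by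
  simp only [satCnf, Set.mem_union, or_imp, forall_and]

lemma satCnf_restrictC_congr {σ τ : Assn X Y} {C : Set (Clause X Y)} {D : Set (X ⊕ Y)}
    (h : ∀ w ∈ D, σ w = τ w) (hσ : satCnf σ (restrictC C D)) : satCnf τ (restrictC C D) := by
  intro c hc
  obtain ⟨l, hl, hsl⟩ := hσ c hc
  exact ⟨l, hl, (h l.1 (hc.2 l hl)).symm.trans hsl⟩

lemma mem_of_satClause_update [DecidableEq X] [DecidableEq Y] {σ : Assn X Y} {c : Clause X Y}
    {w : X ⊕ Y} {b : Bool} (hfalse : ∀ l ∈ c, l.1 ≠ w → ¬ satLit σ l)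
    (hsat : satClause (Function.update σ w b) c) : (w, b) ∈ c := by
  obtain ⟨l, hl, hsl⟩ := hsat
  by_cases hlw : l.1 = w
  · have hlb : l.2 = b := by rw [satLit, hlw, Function.update_self] at hsl; exact hsl.symm
    rwa [← hlw, ← hlb]
  · exact absurd (by rwa [satLit, Function.update_of_ne hlw] at hsl) (hfalse l hl hlw)

end Clauses

section UniqueExtension

variable {X Y : Type}

def UniqueExtension (C : Set (Clause X Y)) (D : Set (X ⊕ Y)) (χ : (X → Bool) → Prop) : Prop :=
  ∀ xa : X → Bool, χ xa →
    ∃ ya : Y → Bool, satCnf (combine xa ya) (restrictC C D) ∧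
      ∀ ya' : Y → Bool, satCnf (combine xa ya') (restrictC C D) →
        ∀ y : Y, Sum.inr y ∈ D → ya' y = ya y

variable {C C' : Set (Clause X Y)} {D : Set (X ⊕ Y)} {χ : (X → Bool) → Prop}

lemma UniqueExtension.congr (hC : UniqueExtension C D χ) (h : restrictC C' D = restrictC C D) :
    UniqueExtension C' D χ := by
  rwa [UniqueExtension, h]

lemma uniqueExtension_of_forall_exists_not_mem (hC : ∀ c ∈ C, ∃ l ∈ c, l.1 ∉ D)
    (hD : ∀ y : Y, Sum.inr y ∉ D) : UniqueExtension C D χ := by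
  have hempty : restrictC C D = ∅ := Set.eq_empty_of_forall_notMem fun c ⟨hc, hcD⟩ =>
    let ⟨l, hl, hlD⟩ := hC c hc; hlD (hcD l hl)
  intro xa _
  refine ⟨fun _ => true, ?_, fun _ _ y hy => absurd hy (hD y)⟩
  rw [hempty]
  exact fun _ h => h.elim

theorem UniqueExtension.uniqueSkolem (hC : UniqueExtension C D χ) {y : Y}
    (hy : Sum.inr y ∈ D) : uniqueSkolem (restrictC C D) χ y := by
  intro xa hχ
  obtain ⟨ya, hsat, huniq⟩ := hC xa hχ
  exact ⟨ya y, ⟨ya, rfl, hsat⟩, fun b ⟨ya', hb, hsat'⟩ => hb ▸ huniq ya' hsat' y hy⟩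

end UniqueExtension

section Determinization

variable {X Y : Type} [DecidableEq X] [DecidableEq Y]

theorem uniqueSkolemRel_of_deterministic_of_unconflicted {v : Y} {C : Set (Clause X Y)}
    {χ : (X → Bool) → Prop} {D : Set (X ⊕ Y)}
    (hdet : deterministic v C χ D) (hunc : unconflicted v C χ D) : uniqueSkolemRel v C χ D := by
  intro σ hσ hχ
  obtain ⟨b, hb, hnb⟩ : ∃ b, Ant C v D b σ ∧ ¬ Ant C v D (!b) σ := by
    rcases hdet σ hσ hχ with h | h
    exacts [⟨true, h, fun h' => hunc σ hσ hχ ⟨h, h'⟩⟩, ⟨false, h, fun h' => hunc σ hσ hχ ⟨h', h⟩⟩]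
  refine ⟨b, fun c hc => ?_, fun b' hb' => ?_⟩
  · by_contra hnsat
    obtain ⟨hcC, ⟨b₀, hb₀⟩, hcD⟩ := hc
    have hfalse : ∀ l ∈ c, l.1 ≠ Sum.inr v → ¬ satLit σ l := fun l hl hlv hsl =>
      hnsat ⟨l, hl, by rwa [satLit, Function.update_of_ne hlv]⟩
    have hb₀b : b₀ = !b := (Bool.eq_or_eq_not b₀ b).resolve_left fun h =>
      hnsat ⟨_, hb₀, by rw [satLit, Function.update_self, h]⟩
    exact hnb ⟨c, ⟨hcC, ⟨b₀, hb₀⟩, hcD⟩, hb₀b ▸ hb₀, hfalse⟩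
  · obtain ⟨c, hcU, -, hfalse⟩ := hb
    have hb'c := mem_of_satClause_update hfalse (hb' c hcU)
    by_contra hne
    exact hnb ⟨c, hcU, (Bool.eq_or_eq_not b' b).resolve_left hne ▸ hb'c, hfalse⟩

theorem UniqueExtension.insert_of_uniqueSkolemRel {C : Set (Clause X Y)} {D : Set (X ⊕ Y)}
    {χ : (X → Bool) → Prop} {v : Y} (hC : UniqueExtension C D χ) (hv : Sum.inr v ∉ D)
    (hrel : uniqueSkolemRel v C χ D) : UniqueExtension C (insert (Sum.inr v) D) χ := by
  intro xa hχ
  obtain ⟨ya, hsat, huniq⟩ := hC xa hχ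
  obtain ⟨b, hb, hbuniq⟩ := hrel (combine xa ya) hsat hχ
  refine ⟨Function.update ya v b, ?_, fun ya' hya' => ?_⟩
  · rw [restrictC_insert_inr, satCnf_union, combine, Sum.elim_update_right]
    refine ⟨satCnf_restrictC_congr (fun w hw => ?_) hsat, hb⟩
    rw [Function.update_of_ne (ne_of_mem_of_not_mem hw hv)]
    rfl
  · have hagree : ∀ y : Y, Sum.inr y ∈ D → ya' y = ya y :=
      huniq ya' (fun c hc => hya' c (restrictC_mono C (Set.subset_insert _ _) hc))
    -- `ya'` agrees with `ya` on `D`, so its value at `v` is the one that `U_v` forces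
    have hv' : ya' v = b := by
      refine hbuniq (ya' v) fun c hc => ?_
      refine satCnf_restrictC_congr (D := insert (Sum.inr v) D) (fun w hw => ?_) hya' c
        (by rw [restrictC_insert_inr]; exact Or.inr hc)
      rcases hw with rfl | hw
      · rw [Function.update_self]; rfl
      · obtain ⟨x⟩ | ⟨y⟩ := w
        · rw [Function.update_of_ne Sum.inl_ne_inr]; rfl
        · rw [Function.update_of_ne (ne_of_mem_of_not_mem hw hv)]
          exact hagree y hw
    rintro y (hy | hy)
    · rw [Sum.inr_injective hy, Function.update_self, hv']
    · rw [Function.update_of_ne (by rintro rfl; exact hv hy), hagree y hy]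

end Determinization

section StackInvariant

variable {X Y : Type}

/-- For `k ≥ C.length`, `C.take k` is the whole stack, so quantifying over all `k` covers every
prefix that Backtrack can return to (`k = 0` holds trivially). -/
def StackInvariant (C : List (Set (Clause X Y))) (D : List (Set (X ⊕ Y)))
    (χ : (X → Bool) → Prop) : Prop :=
  C ≠ [] ∧ C.length = D.length ∧
    ∀ k : ℕ, UniqueExtension (stackUnion (C.take k)) (stackUnion (D.take k)) χ

variable {C : List (Set (Clause X Y))} {D : List (Set (X ⊕ Y))} {χ : (X → Bool) → Prop}

lemma StackInvariant.uniqueExtension (h : StackInvariant C D χ) :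
    UniqueExtension (stackUnion C) (stackUnion D) χ := by
  have hfull := h.2.2 C.length
  rwa [List.take_length, h.2.1, List.take_length] at hfull

lemma stackInvariant_init {φ : Set (Clause X Y)}
    (hφY : ∀ c ∈ φ, ∃ l ∈ c, ∃ y : Y, l.1 = Sum.inr y) :
    StackInvariant [φ] [Set.range Sum.inl] χ := by
  refine ⟨List.cons_ne_nil _ _, rfl, fun k => uniqueExtension_of_forall_exists_not_mem ?_ ?_⟩
  · intro c hc
    obtain ⟨l, hl, y, hly⟩ := hφY c (stackUnion_singleton φ ▸ stackUnion_take_subset _ k hc)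
    refine ⟨l, hl, fun hlX => ?_⟩
    obtain ⟨x, hx⟩ := stackUnion_singleton (Set.range Sum.inl) ▸ stackUnion_take_subset _ k hlX
    exact Sum.inl_ne_inr (hx.trans hly)
  · intro y hy
    obtain ⟨x, hx⟩ := stackUnion_singleton (Set.range Sum.inl) ▸ stackUnion_take_subset _ k hy
    exact Sum.inl_ne_inr hx

lemma StackInvariant.addLast [DecidableEq X] [DecidableEq Y] {v : Y} (h : StackInvariant C D χ)
    (hv : Sum.inr v ∉ stackUnion D) (hdet : deterministic v (stackUnion C) χ (stackUnion D))
    (hunc : unconflicted v (stackUnion C) χ (stackUnion D)) :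
    StackInvariant C (addLast D (Sum.inr v)) χ := by
  obtain ⟨hne, hlen, hk⟩ := h
  have hD : D ≠ [] := by rintro rfl; exact hne (List.length_eq_zero_iff.1 hlen)
  refine ⟨hne, by rw [length_addLast _ hD, hlen], fun k => ?_⟩
  rcases lt_or_ge k D.length with hkD | hkD
  · rw [take_addLast _ hkD]
    exact hk k
  · have hfull := hk k
    rw [List.take_of_length_le (hlen ▸ hkD), List.take_of_length_le hkD] at hfull
    rw [List.take_of_length_le (hlen ▸ hkD),
      List.take_of_length_le ((length_addLast _ hD).trans_le hkD), stackUnion_addLast]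
    exact hfull.insert_of_uniqueSkolemRel hv
      (uniqueSkolemRel_of_deterministic_of_unconflicted hdet hunc)

lemma StackInvariant.append {v : Y} {δ : Set (Clause X Y)} (h : StackInvariant C D χ)
    (hv : Sum.inr v ∉ stackUnion D) (hδ : ∀ c ∈ δ, hasUC c v (stackUnion D)) :
    StackInvariant (C ++ [δ]) (D ++ [∅]) χ := by
  obtain ⟨-, hlen, hk⟩ := h
  refine ⟨by simp, by simp [hlen], fun k => ?_⟩
  have hD : stackUnion ((D ++ [∅]).take k) = stackUnion (D.take k) := by
    rw [List.take_append, stackUnion_append]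
    cases k - D.length <;> simp [stackUnion]
  rw [hD, List.take_append, stackUnion_append]
  refine (hk k).congr (restrictC_eq_of_subset Set.subset_union_left fun c hc hcC => ?_)
  have hcδ : c ∈ δ := stackUnion_singleton δ ▸ stackUnion_take_subset _ _ (hc.resolve_left hcC)
  obtain ⟨⟨b, hb⟩, -⟩ := hδ c hcδ
  exact ⟨_, hb, fun hvD => hv (stackUnion_take_subset D k hvD)⟩

lemma StackInvariant.addFirst {L : Clause X Y} (h : StackInvariant C D χ)
    (hL : ∃ l ∈ L, l.1 ∉ stackUnion D) : StackInvariant (addFirst C L) D χ := by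
  obtain ⟨hne, hlen, hk⟩ := h
  obtain ⟨s, C, rfl⟩ := List.exists_cons_of_ne_nil hne
  refine ⟨List.cons_ne_nil _ _, hlen, fun k => ?_⟩
  cases k with
  | zero => exact hk 0
  | succ k =>
    refine (hk (k + 1)).congr (restrictC_eq_of_subset ?_ fun c hc hcC => ?_)
    · simp only [addFirst, List.take_succ_cons, stackUnion_cons]
      exact Set.union_subset_union_left _ (Set.subset_insert _ _)
    · have hcL : c = L := by
        simp only [addFirst, List.take_succ_cons, stackUnion_cons, Set.insert_union] at hc hcC
        exact hc.resolve_right hcC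
      obtain ⟨l, hl, hlD⟩ := hL
      exact ⟨l, hcL ▸ hl, fun hlD' => hlD (stackUnion_take_subset D _ hlD')⟩

lemma StackInvariant.take {k : ℕ} (h : StackInvariant C D χ) (hk : 0 < k) :
    StackInvariant (C.take k) (D.take k) χ := by
  obtain ⟨hne, hlen, hj⟩ := h
  refine ⟨by simp [hne, hk.ne'], by simp [hlen], fun j => ?_⟩
  rw [List.take_take, List.take_take]
  exact hj _

theorem Step.stackInvariant [DecidableEq X] [DecidableEq Y] {s s' : IDState X Y}
    (hstep : Step s s') (h : StackInvariant s.C s.D fun xa => s.chi xa ∧ s.alpha xa) :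
    StackInvariant s'.C s'.D fun xa => s'.chi xa ∧ s'.alpha xa := by
  cases hstep with
  | propagate _ _ _ _ _ hv hdet hunc => exact h.addLast hv hdet hunc
  | decide _ _ _ _ _ _ hv _ hδ => exact h.append hv hδ
  | learn _ _ _ _ _ _ hL => exact h.addFirst hL
  | backtrack _ _ _ _ _ _ hk _ => exact h.take hk
  | _ => exact h

end StackInvariant

theorem stmt_8_general {X Y : Type} [DecidableEq X] [DecidableEq Y]
    (φ : Set (Clause X Y))
    (hφY : ∀ c ∈ φ, ∃ l ∈ c, ∃ y : Y, l.1 = Sum.inr y) :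
    ∀ s : IDState X Y, Reachable φ s →
      ∀ y : Y, Sum.inr y ∈ stackUnion s.D →
        uniqueSkolem (restrictC (stackUnion s.C) (stackUnion s.D))
          (fun xa => s.chi xa ∧ s.alpha xa) y := by
  intro s hs
  have hinv : StackInvariant s.C s.D fun xa => s.chi xa ∧ s.alpha xa := by
    induction hs with
    | refl => exact stackInvariant_init hφY
    | tail _ hstep ih => exact hstep.stackInvariant ih
  exact fun y hy => hinv.uniqueExtension.uniqueSkolem hy

/-- In every reachable state, every existential variable in (the union of) D has a unique
Skolem function for domain χ∧α in the clause set C restricted to D. -/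
theorem stmt_8 {X Y : Type} [Fintype X] [Fintype Y] [DecidableEq X] [DecidableEq Y]
    (φ : Set (Clause X Y)) (hφfin : φ.Finite)
    (hφY : ∀ c ∈ φ, ∃ l ∈ c, ∃ y : Y, l.1 = Sum.inr y) :
    ∀ s : IDState X Y, Reachable φ s →
      ∀ y : Y, Sum.inr y ∈ stackUnion s.D →
        uniqueSkolem (restrictC (stackUnion s.C) (stackUnion s.D))
          (fun xa => s.chi xa ∧ s.alpha xa) y :=
  stmt_8_general φ hφY
end

section
/- In every state (S, C, D, χ, α) reachable from the initial state via the transition rules of basic Incremental Determinization, the clause set C(0) is logically equivalent to φ: an assignment to X ∪ Y satisfies C(0) if and only if it satisfies φ. -/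
lemma first_addFirst {β : Type} (C : List (Set β)) (x : β) :
    first (addFirst C x) = insert x (first C) := by
  cases C <;> simp [addFirst, first]

lemma first_take {β : Type} (C : List (Set β)) (k : ℕ) (h : 0 < k) :
    first (C.take k) = first C := by
  cases C with
  | nil => simp
  | cons a t =>
    cases k with
    | zero => omega
    | succ n => simp [first]

lemma satCnf_insert {X Y : Type} (σ : Assn X Y) (L : Clause X Y) (s : Set (Clause X Y)) :
    satCnf σ (insert L s) ↔ satClause σ L ∧ satCnf σ s := by
  simp [satCnf]

def IDInv9 {X Y : Type} (φ : Set (Clause X Y)) (s : IDState X Y) : Prop :=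
  (∀ σ : Assn X Y, satCnf σ (first s.C) ↔ satCnf σ φ) ∧
  (∀ L d, s.status = Status.conflict L d →
    ∀ σ : Assn X Y, satCnf σ (first s.C) → satClause σ L) ∧
  s.C ≠ []

lemma idinv9_step {X Y : Type} [DecidableEq X] [DecidableEq Y]
    {φ : Set (Clause X Y)} {s t : IDState X Y}
    (hs : IDInv9 φ s) (h : Step s t) : IDInv9 φ t := by
  obtain ⟨h1, h2, h3⟩ := hs
  cases h with
  | propagate C D χ α v hv hdet hunc => exact ⟨h1, by intro L d hLd; simp at hLd, h3⟩
  | decide C D χ α v δ hv hδfin hδ =>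
    refine ⟨?_, by intro L d hLd; simp at hLd, by simp⟩
    intro σ
    have : first (C ++ [δ]) = first C := by
      cases C with
      | nil => exact absurd rfl h3
      | cons a t => simp [first]
    rw [show (⟨Status.ready, C ++ [δ], D ++ [∅], χ, α⟩ : IDState X Y).C = C ++ [δ] from rfl,
      this]
    exact h1 σ
  | sat C D χ hD => exact ⟨h1, by intro L d hLd; simp at hLd, h3⟩
  | conflict C D χ α v σ₀ hv hsat hχ hα ht hf =>
    refine ⟨h1, ?_, h3⟩
    intro L d hLd σ _
    simp only [Status.conflict.injEq] at hLd
    obtain ⟨hL, _⟩ := hLd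
    subst hL
    refine ⟨(Sum.inr v, σ (Sum.inr v)), ?_, rfl⟩
    cases h : σ (Sum.inr v) <;> simp
  | analyze C D χ α L σ₀ c l hc hl hlc =>
    refine ⟨h1, ?_, h3⟩
    intro L' d hLd σ hσ
    simp only [Status.conflict.injEq] at hLd
    obtain ⟨hL', _⟩ := hLd
    subst hL'
    have hL : satClause σ L := h2 L σ₀ rfl σ hσ
    obtain ⟨m, hm, hmsat⟩ := hL
    by_cases hml : m = l
    · obtain ⟨m', hm', hm'sat⟩ := hσ c hc
      have hne : m' ≠ (l.1, !l.2) := by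
        intro heq
        rw [heq] at hm'sat
        simp only [satLit] at hm'sat hmsat
        rw [hml] at hmsat
        rw [hmsat] at hm'sat
        simp at hm'sat
      exact ⟨m', Finset.mem_union_right _ (Finset.mem_erase.mpr ⟨hne, hm'⟩), hm'sat⟩
    · exact ⟨m, Finset.mem_union.mpr (Or.inl (Finset.mem_erase.mpr ⟨hml, hm⟩)), hmsat⟩
  | learn C D χ α L σ₀ hlearn =>
    refine ⟨?_, by intro L' d hLd; simp at hLd, by cases C <;> simp [addFirst]⟩
    intro σ
    rw [show (⟨Status.ready, addFirst C L, D, χ, α⟩ : IDState X Y).C = addFirst C L from rfl,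
      first_addFirst, satCnf_insert]
    constructor
    · rintro ⟨_, hC⟩; exact (h1 σ).mp hC
    · intro hφ
      have hC : satCnf σ (first C) := (h1 σ).mpr hφ
      exact ⟨h2 L σ₀ rfl σ hC, hC⟩
  | unsat C D χ α L σ₀ hvars hfals => exact ⟨h1, by intro L' d hLd; simp at hLd, h3⟩
  | backtrack S C D χ α k h0 hk =>
    refine ⟨?_, ?_, List.ne_nil_of_length_pos (by simp [List.length_take]; omega)⟩
    · intro σ
      rw [show (⟨S, C.take k, D.take k, χ, α⟩ : IDState X Y).C = C.take k from rfl,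
        first_take C k h0]
      exact h1 σ
    · intro L d hLd σ hσ
      rw [show (⟨S, C.take k, D.take k, χ, α⟩ : IDState X Y).C = C.take k from rfl,
        first_take C k h0] at hσ
      exact h2 L d hLd σ hσ

/-- In every reachable state, C(0) is logically equivalent to φ. -/
theorem stmt_9 {X Y : Type} [Fintype X] [Fintype Y] [DecidableEq X] [DecidableEq Y]
    (φ : Set (Clause X Y)) (hφfin : φ.Finite)
    (hφY : ∀ c ∈ φ, ∃ l ∈ c, ∃ y : Y, l.1 = Sum.inr y) :
    ∀ s : IDState X Y, Reachable φ s →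
      ∀ σ : Assn X Y, satCnf σ (first s.C) ↔ satCnf σ φ := by
  intro s hr
  have hinv : IDInv9 φ s := by
    induction hr with
    | refl =>
      refine ⟨?_, by intro L d hLd; simp [initState] at hLd, by simp [initState]⟩
      intro σ
      simp [initState, first]
    | tail _ hstep ih => exact idinv9_step ih hstep
  exact hinv.1
end
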